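/- arXiv:1202.2706 — 2 statements merged into one kernel-verified Lean document; each statement's English description precedes it below -/
import Mathlib

section
/- Let Y_m(y₁), Y_m(y₂) be two solutions of the implicit Euler recursion Y_{m+1} = Y_m + τ B Y_{m+1} + τ G(x, Y_m) + √τ R_τ ζ_{m+1} driven by the same noise, where B is self-adjoint negative with spectrum bounded above by -μ and G(x,·) is L_g-Lipschitz with L_g < μ. Then for any τ₀ > 0 there is c > 0 such that for 0 < τ ≤ τ₀, ‖Y_m(y₁) - Y_m(y₂)‖ ≤ e^{-cmτ}‖y₁ - y₂‖ almost surely. -/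
/-!
Subtracting the two recursions cancels the common noise, so the difference `r` satisfies the
noise-free implicit step `r' = r + τ B r' + τ Δ` with `‖Δ‖ ≤ L_g ‖r‖`. Pairing it with `r'` and
using `⟪B r', r'⟫ ≤ -μ ‖r'‖²` gives `(1 + τ μ) ‖r'‖ ≤ (1 + τ L_g) ‖r‖`, and the factor
`(1 + τ L_g) / (1 + τ μ)` is at most `exp (-c τ)` with `c = (μ - L_g) / (1 + τ₀ μ)`, uniformly
in `τ ≤ τ₀`.
-/

open RealInnerProductSpace

theorem one_add_mul_norm_le_of_eq_add_smul_add_smul {H : Type*} [NormedAddCommGroup H]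
    [InnerProductSpace ℝ H] {L μ τ : ℝ} {r s b Δ : H} (hτ : 0 ≤ τ)
    (hr : r = s + τ • b + τ • Δ) (hb : ⟪b, r⟫ ≤ -μ * ‖r‖ ^ 2) (hΔ : ‖Δ‖ ≤ L * ‖s‖) :
    (1 + τ * μ) * ‖r‖ ≤ (1 + τ * L) * ‖s‖ := by
  have hsΔ : ‖s + τ • Δ‖ ≤ (1 + τ * L) * ‖s‖ :=
    calc ‖s + τ • Δ‖ ≤ ‖s‖ + τ * ‖Δ‖ := by
          grw [norm_add_le, norm_smul, Real.norm_of_nonneg hτ]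
      _ ≤ (1 + τ * L) * ‖s‖ := by nlinarith
  have hsq : (1 + τ * μ) * ‖r‖ ^ 2 ≤ (1 + τ * L) * ‖s‖ * ‖r‖ :=
    calc (1 + τ * μ) * ‖r‖ ^ 2 ≤ ⟪s + τ • Δ, r⟫ := by
          have hexp : ‖r‖ ^ 2 = ⟪s + τ • Δ, r⟫ + τ * ⟪b, r⟫ := by
            rw [← real_inner_self_eq_norm_sq]
            nth_rewrite 1 [hr]
            simp only [inner_add_left, real_inner_smul_left]
            ring
          nlinarith [mul_le_mul_of_nonneg_left hb hτ]
      _ ≤ ‖s + τ • Δ‖ * ‖r‖ := real_inner_le_norm _ _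
      _ ≤ (1 + τ * L) * ‖s‖ * ‖r‖ := by gcongr
  rcases (norm_nonneg r).eq_or_lt with hr0 | hrpos
  · rw [← hr0, mul_zero]
    exact (norm_nonneg _).trans hsΔ
  · nlinarith

theorem one_add_mul_le_exp_neg_mul_mul_one_add_mul {L μ τ τ₀ : ℝ} (hμ : 0 ≤ μ) (hLμ : L ≤ μ)
    (hτ : 0 ≤ τ) (hττ₀ : τ ≤ τ₀) :
    1 + τ * L ≤ Real.exp (-((μ - L) / (1 + τ₀ * μ)) * τ) * (1 + τ * μ) := by
  set c := (μ - L) / (1 + τ₀ * μ)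
  have hc : 0 ≤ c := div_nonneg (by linarith) (by nlinarith)
  have hcμ : c * (1 + τ * μ) ≤ μ - L :=
    calc c * (1 + τ * μ) ≤ c * (1 + τ₀ * μ) := by gcongr
      _ = μ - L := div_mul_cancel₀ _ (by nlinarith)
  calc 1 + τ * L ≤ (1 - c * τ) * (1 + τ * μ) := by nlinarith [mul_le_mul_of_nonneg_left hcμ hτ]
    _ ≤ Real.exp (-c * τ) * (1 + τ * μ) := by
      gcongr
      linarith [Real.add_one_le_exp (-c * τ)]

theorem stmt2 {H : Type*} [NormedAddCommGroup H] [InnerProductSpace ℝ H]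
    (L_g μ : ℝ) (hL : 0 < L_g) (hLμ : L_g < μ) (τ₀ : ℝ) (hτ₀ : 0 < τ₀) :
    ∃ c > 0, ∀ τ : ℝ, 0 < τ → τ ≤ τ₀ →
      ∀ (B : H →ₗ[ℝ] H), (∀ y : H, ⟪B y, y⟫ ≤ -μ * ‖y‖ ^ 2) →
      ∀ (G : H → H → H) (x : H),
        (∀ (x' y₁' y₂' : H), ‖G x' y₁' - G x' y₂'‖ ≤ L_g * ‖y₁' - y₂'‖) →
      ∀ (y₁ y₂ : H) (Y₁ Y₂ : ℕ → H) (noise : ℕ → H),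
        Y₁ 0 = y₁ → Y₂ 0 = y₂ →
        (∀ m : ℕ, Y₁ (m + 1) = Y₁ m + τ • B (Y₁ (m + 1)) + τ • G x (Y₁ m) + noise m) →
        (∀ m : ℕ, Y₂ (m + 1) = Y₂ m + τ • B (Y₂ (m + 1)) + τ • G x (Y₂ m) + noise m) →
        ∀ m : ℕ, ‖Y₁ m - Y₂ m‖ ≤ Real.exp (-c * m * τ) * ‖y₁ - y₂‖ := by
  have hμ : 0 < μ := hL.trans hLμ
  refine ⟨(μ - L_g) / (1 + τ₀ * μ), div_pos (by linarith) (by positivity), ?_⟩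
  intro τ hτ hττ₀ B hB G x hG y₁ y₂ Y₁ Y₂ noise h₁0 h₂0 h₁ h₂ m
  set c := (μ - L_g) / (1 + τ₀ * μ)
  have hstep : ∀ k, ‖Y₁ (k + 1) - Y₂ (k + 1)‖ ≤ Real.exp (-c * τ) * ‖Y₁ k - Y₂ k‖ := by
    intro k
    have hdiff : Y₁ (k + 1) - Y₂ (k + 1) = (Y₁ k - Y₂ k) + τ • B (Y₁ (k + 1) - Y₂ (k + 1)) +
        τ • (G x (Y₁ k) - G x (Y₂ k)) := by
      conv_lhs => rw [h₁ k, h₂ k]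
      rw [map_sub, smul_sub, smul_sub]
      abel
    refine le_of_mul_le_mul_left ?_ (by positivity : 0 < 1 + τ * μ)
    calc (1 + τ * μ) * ‖Y₁ (k + 1) - Y₂ (k + 1)‖ ≤ (1 + τ * L_g) * ‖Y₁ k - Y₂ k‖ :=
          one_add_mul_norm_le_of_eq_add_smul_add_smul hτ.le hdiff (hB _) (hG _ _ _)
      _ ≤ Real.exp (-c * τ) * (1 + τ * μ) * ‖Y₁ k - Y₂ k‖ := by
          gcongr
          exact one_add_mul_le_exp_neg_mul_mul_one_add_mul hμ.le hLμ.le hτ.le hττ₀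
      _ = (1 + τ * μ) * (Real.exp (-c * τ) * ‖Y₁ k - Y₂ k‖) := by ring
  calc ‖Y₁ m - Y₂ m‖ ≤ Real.exp (-c * τ) ^ m * ‖Y₁ 0 - Y₂ 0‖ :=
        le_geom (u := fun k ↦ ‖Y₁ k - Y₂ k‖) (Real.exp_nonneg _) m fun k _ ↦ hstep k
    _ = Real.exp (-c * m * τ) * ‖y₁ - y₂‖ := by
      rw [← Real.exp_nat_mul, h₁0, h₂0]
      ring_nf
end

section
/- Singular discrete Gronwall lemma: let 0 ≤ η < 1 and let (b_n) be nonnegative reals with b_0 = 0 and, for n ≥ 1, (nΔt)^η b_n ≤ K + C Δt (nΔt)^η Σ_{j=1}^{n-1} (jΔt)^{-η} (jΔt)^η b_j. Then there exists C_T depending on C, η, T such that (nΔt)^η b_n ≤ C_T K for all n with nΔt ≤ T. -/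
/-!
With `a n = (n Δt) ^ η * b n` and `(n Δt) ^ η ≤ T ^ η`, the hypothesis becomes the cumulative
inequality `a n ≤ K + ∑_{1 ≤ j < n} u j * a j` with `u j = C T ^ η Δt (j Δt) ^ (-η)`, so the
discrete Grönwall lemma gives `a n ≤ K ∏ (1 + u j) ≤ K exp (∑ u j)`. The singular weights are
bounded uniformly in `Δt` by comparison with `∫₀^{n Δt} t ^ (-η) dt`:
`∑ Δt (j Δt) ^ (-η) ≤ (n Δt) ^ (1 - η) / (1 - η) ≤ T ^ (1 - η) / (1 - η)`,
whence `C_T = exp (C T / (1 - η))`.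
-/

open Finset Real

theorem one_add_sum_Ico_mul_prod_one_add {R : Type*} [CommSemiring R] (u : ℕ → R) (m n : ℕ) :
    1 + ∑ j ∈ Ico m n, u j * ∏ i ∈ Ico m j, (1 + u i) = ∏ i ∈ Ico m n, (1 + u i) := by
  induction n with
  | zero => simp
  | succ n ih =>
    rcases le_or_gt m n with hmn | hnm
    · rw [sum_Ico_succ_top hmn, prod_Ico_succ_top hmn, ← ih]
      ring
    · simp [Ico_eq_empty_of_le (show n + 1 ≤ m by omega)]

theorem le_mul_prod_one_add_of_le_add_sum {R : Type*} [CommSemiring R] [PartialOrder R]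
    [IsOrderedRing R] {a u : ℕ → R} {K : R} {m N : ℕ}
    (hu : ∀ j, 0 ≤ u j) (ha : ∀ n ≤ N, a n ≤ K + ∑ j ∈ Ico m n, u j * a j) :
    ∀ n ≤ N, a n ≤ K * ∏ j ∈ Ico m n, (1 + u j) := by
  intro n
  induction n using Nat.strong_induction_on with
  | _ n ih =>
    intro hn
    calc a n ≤ K + ∑ j ∈ Ico m n, u j * a j := ha n hn
      _ ≤ K + ∑ j ∈ Ico m n, u j * (K * ∏ i ∈ Ico m j, (1 + u i)) := by
        gcongr with j hj
        · exact hu j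
        · exact ih j (mem_Ico.1 hj).2 ((mem_Ico.1 hj).2.le.trans hn)
      _ = K * ∏ j ∈ Ico m n, (1 + u j) := by
        rw [← one_add_sum_Ico_mul_prod_one_add u m n, mul_add, mul_one, mul_sum]
        simp only [mul_left_comm]

theorem mul_rpow_sub_one_le_rpow_sub_rpow {p x : ℝ} (hp0 : 0 ≤ p) (hp1 : p ≤ 1) (hx : 1 ≤ x) :
    p * x ^ (p - 1) ≤ x ^ p - (x - 1) ^ p := by
  have hx0 : 0 < x := by linarith
  have bernoulli := rpow_one_add_le_one_add_mul_self (s := -x⁻¹)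
    (by linarith [inv_le_one_of_one_le₀ hx]) hp0 hp1
  have hbase : 1 + -x⁻¹ = (x - 1) / x := by field_simp; ring
  rw [hbase, div_rpow (by linarith) hx0.le, div_le_iff₀ (rpow_pos_of_pos hx0 p)] at bernoulli
  have hexpand : (1 + p * -x⁻¹) * x ^ p = x ^ p - p * (x ^ p / x) := by ring
  rw [rpow_sub_one hx0.ne']
  linarith

theorem sum_Icc_rpow_neg_le {η : ℝ} (hη0 : 0 ≤ η) (hη1 : η < 1) (m : ℕ) :
    ∑ j ∈ Icc 1 m, (j : ℝ) ^ (-η) ≤ (m : ℝ) ^ (1 - η) / (1 - η) := by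
  induction m with
  | zero => simp [zero_rpow (show (1 : ℝ) - η ≠ 0 by linarith)]
  | succ m ih =>
    have step := mul_rpow_sub_one_le_rpow_sub_rpow (p := 1 - η) (x := m + 1)
      (by linarith) (by linarith) (by simp)
    rw [sub_sub_cancel_left, add_sub_cancel_right] at step
    rw [sum_Icc_succ_top (by omega)]
    push_cast
    calc ∑ j ∈ Icc 1 m, (j : ℝ) ^ (-η) + ((m : ℝ) + 1) ^ (-η)
        ≤ (m : ℝ) ^ (1 - η) / (1 - η) + ((m : ℝ) + 1) ^ (-η) := by gcongr
      _ ≤ ((m : ℝ) + 1) ^ (1 - η) / (1 - η) := by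
        rw [div_add' _ _ _ (by linarith), div_le_div_iff_of_pos_right (by linarith)]
        linarith

theorem sum_Ico_mul_rpow_neg_le {η Δt : ℝ} (hη0 : 0 ≤ η) (hη1 : η < 1) (hΔt : 0 < Δt) (n : ℕ) :
    ∑ j ∈ Ico 1 n, Δt * ((j : ℝ) * Δt) ^ (-η) ≤ ((n : ℝ) * Δt) ^ (1 - η) / (1 - η) := by
  have hterm (j : ℕ) : Δt * ((j : ℝ) * Δt) ^ (-η) = Δt ^ (1 - η) * (j : ℝ) ^ (-η) := by
    rw [mul_rpow (Nat.cast_nonneg j) hΔt.le, sub_eq_add_neg, rpow_add hΔt, rpow_one]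
    ring
  calc ∑ j ∈ Ico 1 n, Δt * ((j : ℝ) * Δt) ^ (-η)
      = Δt ^ (1 - η) * ∑ j ∈ Ico 1 n, (j : ℝ) ^ (-η) := by
        rw [mul_sum]
        exact sum_congr rfl fun j _ => hterm j
    _ ≤ Δt ^ (1 - η) * ∑ j ∈ Icc 1 n, (j : ℝ) ^ (-η) := by
        gcongr
        exact Ico_subset_Icc_self
    _ ≤ Δt ^ (1 - η) * ((n : ℝ) ^ (1 - η) / (1 - η)) := by
        gcongr
        exact sum_Icc_rpow_neg_le hη0 hη1 n
    _ = ((n : ℝ) * Δt) ^ (1 - η) / (1 - η) := by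
        rw [mul_rpow (Nat.cast_nonneg n) hΔt.le]
        ring

theorem rpow_mul_sum_Ico_mul_rpow_neg_le {η Δt T : ℝ} (hη0 : 0 ≤ η) (hη1 : η < 1)
    (hΔt : 0 < Δt) {N : ℕ} (hN : (N : ℝ) * Δt ≤ T) :
    T ^ η * ∑ j ∈ Ico 1 N, Δt * ((j : ℝ) * Δt) ^ (-η) ≤ T / (1 - η) := by
  have hT : 0 ≤ T := le_trans (by positivity) hN
  calc T ^ η * ∑ j ∈ Ico 1 N, Δt * ((j : ℝ) * Δt) ^ (-η)
      ≤ T ^ η * (((N : ℝ) * Δt) ^ (1 - η) / (1 - η)) := by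
        gcongr
        exact sum_Ico_mul_rpow_neg_le hη0 hη1 hΔt N
    _ ≤ T ^ η * (T ^ (1 - η) / (1 - η)) := by gcongr
    _ = T / (1 - η) := by
        rw [mul_div_assoc', ← rpow_add' hT (by norm_num), add_sub_cancel, rpow_one]

theorem stmt10_general (η C T : ℝ) (hη0 : 0 ≤ η) (hη1 : η < 1) (hC : 0 ≤ C) :
    ∃ C_T > 0, ∀ Δt : ℝ, 0 < Δt → ∀ K : ℝ, 0 ≤ K → ∀ b : ℕ → ℝ,
      (∀ n, 0 ≤ b n) → b 0 = 0 →
      (∀ n : ℕ, 1 ≤ n →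
        ((n : ℝ) * Δt) ^ η * b n ≤
          K + C * Δt * ((n : ℝ) * Δt) ^ η *
            ∑ j ∈ Finset.Ico 1 n, ((j : ℝ) * Δt) ^ (-η) * (((j : ℝ) * Δt) ^ η * b j)) →
      ∀ n : ℕ, (n : ℝ) * Δt ≤ T → ((n : ℝ) * Δt) ^ η * b n ≤ C_T * K := by
  refine ⟨exp (C * T / (1 - η)), exp_pos _, ?_⟩
  intro Δt hΔt K hK b hb hb0 hrec N hN
  set a : ℕ → ℝ := fun n => ((n : ℝ) * Δt) ^ η * b n
  set u : ℕ → ℝ := fun j => C * T ^ η * (Δt * ((j : ℝ) * Δt) ^ (-η))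
  have hT : 0 ≤ T := le_trans (by positivity) hN
  have hu (j : ℕ) : 0 ≤ u j := by positivity
  have ha : ∀ n ≤ N, a n ≤ K + ∑ j ∈ Ico 1 n, u j * a j := by
    intro n hn
    rcases Nat.eq_zero_or_pos n with rfl | hn1
    · simpa [a, hb0] using hK
    have hnT : (n : ℝ) * Δt ≤ T := le_trans (by gcongr) hN
    calc a n ≤ K + C * Δt * ((n : ℝ) * Δt) ^ η * ∑ j ∈ Ico 1 n, ((j : ℝ) * Δt) ^ (-η) * a j :=
          hrec n hn1
      _ ≤ K + C * Δt * T ^ η * ∑ j ∈ Ico 1 n, ((j : ℝ) * Δt) ^ (-η) * a j := by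
          gcongr
          exact sum_nonneg fun j _ => by have := hb j; positivity
      _ = K + ∑ j ∈ Ico 1 n, u j * a j := by
          rw [mul_sum]
          exact congrArg (K + ·) (sum_congr rfl fun j _ => by simp only [u]; ring)
  have hsum : ∑ j ∈ Ico 1 N, u j ≤ C * T / (1 - η) := by
    rw [← mul_sum, mul_assoc, mul_div_assoc]
    gcongr
    exact rpow_mul_sum_Ico_mul_rpow_neg_le hη0 hη1 hΔt hN
  calc a N ≤ K * ∏ j ∈ Ico 1 N, (1 + u j) := le_mul_prod_one_add_of_le_add_sum hu ha N le_rfl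
    _ ≤ K * exp (∑ j ∈ Ico 1 N, u j) := by
        gcongr
        exact prod_one_add_le_exp_sum _ hu
    _ ≤ exp (C * T / (1 - η)) * K := by
        rw [mul_comm]
        gcongr

theorem stmt10 (η C T : ℝ) (hη0 : 0 ≤ η) (hη1 : η < 1) (hC : 0 ≤ C) (hT : 0 < T) :
    ∃ C_T > 0, ∀ Δt : ℝ, 0 < Δt → ∀ K : ℝ, 0 ≤ K → ∀ b : ℕ → ℝ,
      (∀ n, 0 ≤ b n) → b 0 = 0 →
      (∀ n : ℕ, 1 ≤ n →
        ((n : ℝ) * Δt) ^ η * b n ≤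
          K + C * Δt * ((n : ℝ) * Δt) ^ η *
            ∑ j ∈ Finset.Ico 1 n, ((j : ℝ) * Δt) ^ (-η) * (((j : ℝ) * Δt) ^ η * b j)) →
      ∀ n : ℕ, (n : ℝ) * Δt ≤ T → ((n : ℝ) * Δt) ^ η * b n ≤ C_T * K :=
  stmt10_general η C T hη0 hη1 hC
end
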